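/- For every m ≥ 0 and every n with α_m < n < β_m, writing r = (n − α_m − 1) mod t, one has: SG(n) = r + 1 if r ≤ t − 3, SG(n) = 0 if r = t − 2, and SG(n) = t − 1 if r = t − 1, where SG is the Sprague–Grundy function of the game i-Mark([1,t−1],{d}). (That is, the SG sequence of the interval B_m = [α_m+1, β_m−1] is (1,2,…,t−2,0,t−1) repeated (β_m − α_m − t + 1)/t times followed by 1,…,t−2.) -/
import Mathlib


/-- The minimum excludant of a finite set of naturals. -/
noncomputable def mex (s : Finset ℕ) : ℕ := sInf {x : ℕ | x ∉ s}

/-- Sprague–Grundy function of the game i-Mark([1,t−1],{d}):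
from a pile of `n` tokens one may subtract any `s` with `1 ≤ s ≤ t−1` and `s ≤ n`,
or replace a positive pile size `n` divisible by `d` by `n / d`. -/
noncomputable def sg (t d : ℕ) (hd : 2 ≤ d) (n : ℕ) : ℕ :=
  mex ((Finset.Icc 1 (min (t - 1) n)).attach.image (fun s => sg t d hd (n - s.1)) ∪
       (if h : 0 < n ∧ d ∣ n then {sg t d hd (n / d)} else ∅))
termination_by n
decreasing_by
  · have hs := s.2
    simp only [Finset.mem_Icc] at hs
    omega
  · exact Nat.div_lt_self h.1 hd

/-- `α_m = d + d² + ⋯ + d^{m+1}`. -/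
def alpha (d m : ℕ) : ℕ := ∑ i ∈ Finset.Icc 1 (m + 1), d ^ i

/-- `β_m = d + ⋯ + d^m + t·d^{m+1}`. -/
def beta (t d m : ℕ) : ℕ := (∑ i ∈ Finset.Icc 1 m, d ^ i) + t * d ^ (m + 1)


def pat (t r : ℕ) : ℕ := if r = t - 1 then t - 1 else if r = t - 2 then 0 else r + 1

def Opt (t d : ℕ) (hd : 2 ≤ d) (n x : ℕ) : Prop :=
  (∃ s, 1 ≤ s ∧ s ≤ t - 1 ∧ s ≤ n ∧ x = sg t d hd (n - s)) ∨
  (0 < n ∧ d ∣ n ∧ x = sg t d hd (n / d))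

lemma mex_eq {S : Finset ℕ} {k : ℕ} (h1 : ∀ j, j < k → j ∈ S) (h2 : k ∉ S) : mex S = k := by
  unfold mex
  have hk : k ∈ {x : ℕ | x ∉ S} := h2
  apply le_antisymm (Nat.sInf_le hk)
  by_contra hc
  push_neg at hc
  exact (Nat.sInf_mem ⟨k, hk⟩) (h1 _ hc)

lemma sg_eq_of {t d : ℕ} (hd : 2 ≤ d) {n k : ℕ}
    (h1 : ∀ j, j < k → Opt t d hd n j)
    (h2 : ¬ Opt t d hd n k) : sg t d hd n = k := by
  have hmem : ∀ x : ℕ, (x ∈ (Finset.Icc 1 (min (t - 1) n)).attach.image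
      (fun s => sg t d hd (n - s.1)) ∪
      (if h : 0 < n ∧ d ∣ n then {sg t d hd (n / d)} else ∅)) ↔ Opt t d hd n x := by
    intro x
    rw [Finset.mem_union, Finset.mem_image]
    constructor
    · rintro (⟨⟨s, hs⟩, -, rfl⟩ | hx)
      · rw [Finset.mem_Icc] at hs
        exact Or.inl ⟨s, by omega, by omega, by omega, rfl⟩
      · split_ifs at hx with h
        · rw [Finset.mem_singleton] at hx
          exact Or.inr ⟨h.1, h.2, hx.symm ▸ rfl⟩
        · simp at hx
    · rintro (⟨s, hs1, hs2, hs3, rfl⟩ | ⟨h1', h2', rfl⟩)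
      · exact Or.inl ⟨⟨s, Finset.mem_Icc.mpr ⟨hs1, by omega⟩⟩, Finset.mem_attach _ _, rfl⟩
      · right; rw [dif_pos ⟨h1', h2'⟩]; exact Finset.mem_singleton_self _
  rw [sg]
  exact mex_eq (fun j hj => (hmem j).mpr (h1 j hj)) (fun hk => h2 ((hmem k).mp hk))

lemma htd {t d : ℕ} (ht : 2 ≤ t) (hd : 2 ≤ d) (hmod : d % t = 1) : t + 1 ≤ d := by
  rcases Nat.lt_or_ge d t with h | h
  · rw [Nat.mod_eq_of_lt h] at hmod; omega
  · rcases Nat.eq_or_lt_of_le h with h' | h'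
    · subst h'; rw [Nat.mod_self] at hmod; omega
    · omega

lemma sum_Icc_top (d k : ℕ) :
    ∑ i ∈ Finset.Icc 1 (k + 1), d ^ i = (∑ i ∈ Finset.Icc 1 k, d ^ i) + d ^ (k + 1) :=
  Finset.sum_Icc_succ_top (by omega) _

lemma sum_Icc_pow_succ (d k : ℕ) :
    ∑ i ∈ Finset.Icc 1 (k + 1), d ^ i = d * ((∑ i ∈ Finset.Icc 1 k, d ^ i) + 1) := by
  induction k with
  | zero => simp
  | succ k ih =>
    rw [sum_Icc_top d k] at ih
    rw [sum_Icc_top d (k+1), sum_Icc_top d k]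
    have e1 : d * (∑ i ∈ Finset.Icc 1 k, d ^ i + d ^ (k + 1) + 1)
        = d * (∑ i ∈ Finset.Icc 1 k, d ^ i + 1) + d * d ^ (k + 1) := by ring
    have e2 : d ^ (k + 1 + 1) = d * d ^ (k + 1) := by ring
    omega

lemma alpha_zero (d : ℕ) : alpha d 0 = d := by simp [alpha]

lemma alpha_succ (d m : ℕ) : alpha d (m + 1) = d * (alpha d m + 1) := by
  unfold alpha; exact sum_Icc_pow_succ d (m + 1)

lemma beta_zero (t d : ℕ) : beta t d 0 = t * d := by simp [beta]

lemma beta_succ (t d m : ℕ) : beta t d (m + 1) = d * (beta t d m + 1) := by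
  unfold beta
  rw [sum_Icc_pow_succ d m]
  ring

lemma alpha_eq (d m : ℕ) : alpha d m = (∑ i ∈ Finset.Icc 1 m, d ^ i) + d ^ (m + 1) := by
  unfold alpha; exact sum_Icc_top d m

lemma key1 (t d m : ℕ) : beta t d m + d ^ (m + 1) = alpha d m + t * d ^ (m + 1) := by
  rw [alpha_eq, beta]; ring

lemma key2 (t d m : ℕ) :
    alpha d (m + 1) + t * d ^ (m + 1) = beta t d m + d ^ (m + 1) + d ^ (m + 2) := by
  unfold beta
  rw [alpha_eq, sum_Icc_top]
  ring

lemma pow_mod_one {t d : ℕ} (hmod : d % t = 1) (k : ℕ) : d ^ k % t = 1 % t := by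
  induction k with
  | zero => rfl
  | succ k ih => rw [pow_succ, Nat.mul_mod, ih, hmod, mul_one, Nat.mod_mod_of_dvd _ dvd_rfl]

lemma alpha_mod {t d : ℕ} (ht : 2 ≤ t) (hmod : d % t = 1) (m : ℕ) :
    alpha d m % t = (m + 1) % t := by
  induction m with
  | zero => rw [alpha_zero, hmod, Nat.one_mod_eq_one.mpr (by omega)]
  | succ m ih =>
    rw [alpha_succ, Nat.mul_mod, hmod, one_mul, Nat.mod_mod_of_dvd _ dvd_rfl]
    calc (alpha d m + 1) % t = ((alpha d m) % t + 1 % t) % t := Nat.add_mod _ _ _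
      _ = ((m + 1) % t + 1 % t) % t := by rw [ih]
      _ = (m + 1 + 1) % t := (Nat.add_mod _ _ _).symm

lemma beta_mod {t d : ℕ} (hmod : d % t = 1) (m : ℕ) :
    beta t d m % t = m % t := by
  induction m with
  | zero => rw [beta_zero, Nat.mul_mod_right, Nat.zero_mod]
  | succ m ih =>
    rw [beta_succ, Nat.mul_mod, hmod, one_mul, Nat.mod_mod_of_dvd _ dvd_rfl]
    calc (beta t d m + 1) % t = ((beta t d m) % t + 1 % t) % t := Nat.add_mod _ _ _
      _ = (m % t + 1 % t) % t := by rw [ih]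
      _ = (m + 1) % t := (Nat.add_mod _ _ _).symm

lemma exists_rep {t a b : ℕ} (h : a % t = b % t) (hle : b ≤ a) : ∃ w, a = b + t * w := by
  have h2 : b ≡ a [MOD t] := h.symm
  obtain ⟨w, hw⟩ := (Nat.modEq_iff_dvd' hle).mp h2
  exact ⟨w, by omega⟩

lemma pow_ge {d : ℕ} (hd : 2 ≤ d) (m : ℕ) : d ≤ d ^ (m + 1) :=
  Nat.le_self_pow (by omega) d

lemma alpha_ge {d : ℕ} (hd : 2 ≤ d) (m : ℕ) : d ≤ alpha d m := by
  induction m with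
  | zero => rw [alpha_zero]
  | succ m ih =>
    rw [alpha_succ]
    have := Nat.mul_le_mul_left d (show 1 ≤ alpha d m + 1 by omega)
    omega

lemma beta_gt {t d : ℕ} (ht : 2 ≤ t) (hd : 2 ≤ d) (hmod : d % t = 1) (m : ℕ) :
    alpha d m + 2 * t - 1 ≤ beta t d m := by
  have hk := key1 t d m
  have hX : t + 1 ≤ d ^ (m + 1) := le_trans (htd ht hd hmod) (pow_ge hd m)
  obtain ⟨y, hy⟩ : ∃ y, d ^ (m + 1) = t + 1 + y := ⟨d ^ (m+1) - t - 1, by omega⟩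
  have h1 : t * (t + 1 + y) = t * t + t + t * y := by ring
  have h2 : 2 * t ≤ t * t := Nat.mul_le_mul_right t ht
  have h3 : 2 * y ≤ t * y := Nat.mul_le_mul_right y ht
  rw [hy] at hk
  omega

lemma alpha_succ_gt {t d : ℕ} (ht : 2 ≤ t) (hd : 2 ≤ d) (hmod : d % t = 1) (m : ℕ) :
    beta t d m + t + 2 ≤ alpha d (m + 1) := by
  have hk := key2 t d m
  have hX : t + 1 ≤ d ^ (m + 1) := le_trans (htd ht hd hmod) (pow_ge hd m)
  have h1 : (t + 1) * d ^ (m + 1) ≤ d * d ^ (m + 1) :=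
    Nat.mul_le_mul_right _ (htd ht hd hmod)
  have h2 : (t + 1) * d ^ (m + 1) = t * d ^ (m + 1) + d ^ (m + 1) := by ring
  have h3 : d * d ^ (m + 1) = d ^ (m + 2) := by ring
  omega

lemma E5 {t d : ℕ} (ht : 2 ≤ t) (hd : 2 ≤ d) (hmod : d % t = 1) (m : ℕ) :
    ∃ w, 2 ≤ w ∧ beta t d m + 1 = alpha d m + t * w := by
  have hmodeq : (beta t d m + 1) % t = alpha d m % t := by
    rw [alpha_mod ht hmod]
    calc (beta t d m + 1) % t = ((beta t d m) % t + 1 % t) % t := Nat.add_mod _ _ _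
      _ = (m % t + 1 % t) % t := by rw [beta_mod hmod]
      _ = (m + 1) % t := (Nat.add_mod _ _ _).symm
  have hgt := beta_gt ht hd hmod m
  obtain ⟨w, hw⟩ := exists_rep hmodeq (by omega)
  refine ⟨w, ?_, hw⟩
  by_contra hc
  push_neg at hc
  have : t * w ≤ t * 1 := Nat.mul_le_mul_left t (by omega)
  omega

lemma E6 {t d : ℕ} (ht : 2 ≤ t) (hd : 2 ≤ d) (hmod : d % t = 1) (m : ℕ) :
    ∃ w, 1 ≤ w ∧ alpha d (m + 1) = beta t d m + 2 + t * w := by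
  have hmodeq : alpha d (m + 1) % t = (beta t d m + 2) % t := by
    rw [alpha_mod ht hmod]
    show (m + 2) % t = _
    exact (calc (beta t d m + 2) % t = ((beta t d m) % t + 2 % t) % t := Nat.add_mod _ _ _
      _ = (m % t + 2 % t) % t := by rw [beta_mod hmod]
      _ = (m + 2) % t := (Nat.add_mod _ _ _).symm).symm
  have hgt := alpha_succ_gt ht hd hmod m
  obtain ⟨w, hw⟩ := exists_rep hmodeq (by omega)
  refine ⟨w, ?_, hw⟩
  by_contra hc
  push_neg at hc
  have : t * w ≤ t * 0 := Nat.mul_le_mul_left t (by omega)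
  omega

lemma E7 {t d : ℕ} (ht : 2 ≤ t) (hd : 2 ≤ d) (hmod : d % t = 1) :
    ∃ w, 1 ≤ w ∧ d = t * w + 1 := by
  have h := Nat.div_add_mod d t
  refine ⟨d / t, ?_, by omega⟩
  have := htd ht hd hmod
  by_contra hc
  push_neg at hc
  have : t * (d / t) ≤ t * 0 := Nat.mul_le_mul_left t (by omega)
  omega
-- pat lemmas + resid

lemma pat_lt {t r : ℕ} (ht : 2 ≤ t) (hr : r < t) : pat t r < t := by
  unfold pat; split_ifs <;> omega

lemma pat_inj {t r1 r2 : ℕ} (ht : 2 ≤ t) (h1 : r1 < t) (h2 : r2 < t)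
    (h : pat t r1 = pat t r2) : r1 = r2 := by
  unfold pat at h; split_ifs at h <;> omega

lemma pat_surj {t j : ℕ} (ht : 2 ≤ t) (hj : j < t) :
    ∃ ρ, ρ < t ∧ pat t ρ = j ∧ (j ≠ t - 1 → ρ ≤ t - 2) := by
  refine ⟨if j = t - 1 then t - 1 else if j = 0 then t - 2 else j - 1, ?_, ?_, ?_⟩
  · split_ifs <;> omega
  · unfold pat; split_ifs <;> omega
  · split_ifs <;> omega

lemma resid {t d e q r : ℕ} (ht : 2 ≤ t) (hd : 2 ≤ d) (hmod : d % t = 1)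
    (he : 1 ≤ e) (hr : r < t) (heq : d * e = 1 + t * q + r) :
    (r + 2 ≤ t → ∃ u, e = t * u + r + 1) ∧ (r = t - 1 → ∃ u, 1 ≤ u ∧ e = t * u) := by
  obtain ⟨w₀, hw₀, hw⟩ := E7 ht hd hmod
  have h1 : d * e = t * (w₀ * e) + e := by rw [hw]; ring
  have h2 : t * (w₀ * e) < t * (q + 1) := by
    have e1 : t * (q + 1) = t * q + t := by ring
    omega
  have h3 : w₀ * e ≤ q := by have := Nat.lt_of_mul_lt_mul_left h2; omega
  obtain ⟨q₃, hq₃⟩ : ∃ q₃, q = w₀ * e + q₃ := ⟨q - w₀ * e, by omega⟩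
  subst hq₃
  have h4 : t * (w₀ * e + q₃) = t * (w₀ * e) + t * q₃ := by ring
  constructor
  · intro hrt; exact ⟨q₃, by omega⟩
  · intro hrt
    have h5 : t * (q₃ + 1) = t * q₃ + t := by ring
    exact ⟨q₃ + 1, by omega, by omega⟩
lemma r_zero {t a b r : ℕ} (ht : 1 ≤ t) (hr : r < t) (h : t * a + r = t * b) : r = 0 := by
  rcases le_or_gt b a with hab | hab
  · have := Nat.mul_le_mul_left t hab; omega
  · obtain ⟨δ, rfl⟩ : ∃ δ, b = a + 1 + δ := ⟨b - a - 1, by omega⟩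
    have e : t * (a + 1 + δ) = t * a + t + t * δ := by ring
    omega

lemma sg_main {t d : ℕ} (ht : 2 ≤ t) (hd : 2 ≤ d) (hmod : d % t = 1) : ∀ n : ℕ,
    (∀ m, n = alpha d m → sg t d hd n = if t = 2 ∧ 1 ≤ m then 1 else t) ∧
    (∀ m q r, r < t → n = alpha d m + 1 + t * q + r → n < beta t d m → sg t d hd n = pat t r) ∧
    (∀ m, n = beta t d m → sg t d hd n = t) ∧
    (∀ m q r, r < t → n = beta t d m + 1 + t * q + r → n < alpha d (m + 1) → sg t d hd n = r) ∧
    (∀ q r, r < t → n = t * q + r → n < d → sg t d hd n = r) := by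
  intro n
  induction n using Nat.strong_induction_on with
  | _ n ih =>
  have hd' : t + 1 ≤ d := htd ht hd hmod
  have ihA : ∀ k, k < n → ∀ m, k = alpha d m →
      sg t d hd k = if t = 2 ∧ 1 ≤ m then 1 else t := fun k hk => (ih k hk).1
  have ihB : ∀ k, k < n → ∀ m q r, r < t → k = alpha d m + 1 + t * q + r →
      k < beta t d m → sg t d hd k = pat t r := fun k hk => (ih k hk).2.1
  have ihC : ∀ k, k < n → ∀ m, k = beta t d m → sg t d hd k = t := fun k hk => (ih k hk).2.2.1
  have ihD : ∀ k, k < n → ∀ m q r, r < t → k = beta t d m + 1 + t * q + r →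
      k < alpha d (m + 1) → sg t d hd k = r := fun k hk => (ih k hk).2.2.2.1
  have ihE : ∀ k, k < n → ∀ q r, r < t → k = t * q + r → k < d →
      sg t d hd k = r := fun k hk => (ih k hk).2.2.2.2
  refine ⟨?_, ?_, ?_, ?_, ?_⟩
  · -- Part A : n = alpha d M
    intro M hM
    cases M with
    | zero =>
      rw [alpha_zero] at hM
      obtain ⟨w₀, hw₀1, hw₀⟩ := E7 ht hd hmod
      obtain ⟨w₁, rfl⟩ : ∃ w₁, w₀ = w₁ + 1 := ⟨w₀ - 1, by omega⟩
      have e1 : t * (w₁ + 1) = t * w₁ + t := by ring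
      have hsg1 : sg t d hd 1 = 1 := ihE 1 (by omega) 0 1 (by omega) (by omega) (by omega)
      rw [if_neg (by omega)]
      apply sg_eq_of hd
      · intro j hj
        by_cases hj1 : j = 1
        · right
          refine ⟨by omega, by rw [hM], ?_⟩
          rw [hM, Nat.div_self (show 0 < d by omega), hsg1, hj1]
        · left
          by_cases hj0 : j = 0
          · refine ⟨1, by omega, by omega, by omega, ?_⟩
            rw [ihE (n - 1) (by omega) (w₁ + 1) 0 (by omega) (by omega) (by omega), hj0]
          · refine ⟨t + 1 - j, by omega, by omega, by omega, ?_⟩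
            rw [ihE (n - (t + 1 - j)) (by omega) w₁ j (by omega) (by omega) (by omega)]
      · rintro (⟨s, hs1, hs2, hs3, hval⟩ | ⟨hpos, hdvd, hval⟩)
        · by_cases hs : s = 1
          · rw [ihE (n - s) (by omega) (w₁ + 1) 0 (by omega) (by omega) (by omega)] at hval
            omega
          · rw [ihE (n - s) (by omega) w₁ (t + 1 - s) (by omega) (by omega) (by omega)] at hval
            omega
        · rw [hM, Nat.div_self (show 0 < d by omega), hsg1] at hval; omega
    | succ M' =>
      obtain ⟨w, hw1, hw⟩ := E6 ht hd hmod M'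
      obtain ⟨w₂, rfl⟩ : ∃ w₂, w = w₂ + 1 := ⟨w - 1, by omega⟩
      have e1 : t * (w₂ + 1) = t * w₂ + t := by ring
      obtain ⟨v, hv2, hv⟩ := E5 ht hd hmod M'
      have e2 : t * 2 ≤ t * v := Nat.mul_le_mul_left t hv2
      have e3 : t * 2 = t + t := by ring
      have hα' := alpha_ge hd M'
      have hquot : n / d = alpha d M' + 1 := by
        rw [hM, alpha_succ, Nat.mul_div_cancel_left _ (show 0 < d by omega)]
      have hdvd : d ∣ n := by rw [hM, alpha_succ]; exact ⟨_, rfl⟩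
      have hdivval : sg t d hd (alpha d M' + 1) = pat t 0 :=
        ihB (alpha d M' + 1) (by omega) M' 0 0 (by omega) (by omega) (by omega)
      have hsub : ∀ s, 1 ≤ s → s ≤ t - 1 →
          sg t d hd (n - s) = if s = 1 then 0 else t + 1 - s := by
        intro s hsa hsb
        by_cases hs : s = 1
        · rw [if_pos hs, hs,
            ihD (n - 1) (by omega) M' (w₂ + 1) 0 (by omega) (by omega) (by omega)]
        · rw [if_neg hs,
            ihD (n - s) (by omega) M' w₂ (t + 1 - s) (by omega) (by omega) (by omega)]
      by_cases ht2 : t = 2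
      · rw [if_pos ⟨ht2, by omega⟩]
        apply sg_eq_of hd
        · intro j hj
          left
          refine ⟨1, by omega, by omega, by omega, ?_⟩
          rw [hsub 1 le_rfl (by omega), if_pos rfl]; omega
        · rintro (⟨s, hs1, hs2, hs3, hval⟩ | ⟨hpos, hdvd', hval⟩)
          · rw [hsub s hs1 hs2] at hval; split_ifs at hval <;> omega
          · rw [hquot, hdivval] at hval
            unfold pat at hval; split_ifs at hval <;> omega
      · rw [if_neg (fun h => ht2 h.1)]
        apply sg_eq_of hd
        · intro j hj
          by_cases hj1 : j = 1
          · right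
            refine ⟨by omega, hdvd, ?_⟩
            rw [hquot, hdivval, hj1]
            unfold pat; split_ifs <;> omega
          · left
            by_cases hj0 : j = 0
            · refine ⟨1, by omega, by omega, by omega, ?_⟩
              rw [hsub 1 le_rfl (by omega), if_pos rfl, hj0]
            · refine ⟨t + 1 - j, by omega, by omega, by omega, ?_⟩
              rw [hsub (t + 1 - j) (by omega) (by omega), if_neg (by omega)]
              omega
        · rintro (⟨s, hs1, hs2, hs3, hval⟩ | ⟨hpos, hdvd', hval⟩)
          · rw [hsub s hs1 hs2] at hval; split_ifs at hval <;> omega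
          · rw [hquot, hdivval] at hval
            have := pat_lt ht (show (0:ℕ) < t by omega)
            omega
  · -- Part B : n in (alpha M, beta M)
    intro M q r hr hrep hltβ
    obtain ⟨v, hv2, hv⟩ := E5 ht hd hmod M
    obtain ⟨v₂, rfl⟩ : ∃ v₂, v = v₂ + 2 := ⟨v - 2, by omega⟩
    have e5a : t * (v₂ + 2) = t * v₂ + t + t := by ring
    have e5b : t * (v₂ + 1) = t * v₂ + t := by ring
    have hαd : d ≤ alpha d M := alpha_ge hd M
    have hBdiv : ∀ x, d ∣ n → x = sg t d hd (n / d) → x ≠ pat t r := by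
      intro x hdvd hval hx
      obtain ⟨u, hu⟩ := hdvd
      have hquot : n / d = u := by rw [hu, Nat.mul_div_cancel_left _ (show 0 < d by omega)]
      rw [hquot] at hval
      have huln : u < n := by
        have h4 : 2 * u ≤ d * u := Nat.mul_le_mul_right u hd
        omega
      cases M with
      | zero =>
        rw [alpha_zero] at hrep hαd hv
        have hβ0 : beta t d 0 = t * d := beta_zero t d
        have ed : t * d = d * t := mul_comm t d
        have h2 : 1 < u := Nat.lt_of_mul_lt_mul_left (show d * 1 < d * u by omega)
        have h3 : u < t := Nat.lt_of_mul_lt_mul_left (show d * u < d * t by omega)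
        obtain ⟨e, rfl⟩ : ∃ e, u = 1 + e := ⟨u - 1, by omega⟩
        have he : d * (1 + e) = d + d * e := by ring
        have heq : d * e = 1 + t * q + r := by omega
        have hres := resid ht hd hmod (by omega) hr heq
        by_cases hrt : r = t - 1
        · obtain ⟨u₃, hu₃1, hu₃⟩ := hres.2 hrt
          have e6 : t * 1 ≤ t * u₃ := Nat.mul_le_mul_left t hu₃1
          omega
        · obtain ⟨u₃, hu₃⟩ := hres.1 (by omega)
          have hu₃0 : u₃ = 0 := by
            by_contra hcon
            have : t * 1 ≤ t * u₃ := Nat.mul_le_mul_left t (by omega)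
            omega
          subst hu₃0
          rw [ihE (1 + e) (by omega) 0 (1 + e) (by omega) (by omega) (by omega)] at hval
          unfold pat at hx; split_ifs at hx <;> omega
      | succ M' =>
        have hα : alpha d (M' + 1) = d * (alpha d M' + 1) := alpha_succ d M'
        have hβ : beta t d (M' + 1) = d * (beta t d M' + 1) := beta_succ t d M'
        have h2 : alpha d M' + 1 < u :=
          Nat.lt_of_mul_lt_mul_left (show d * (alpha d M' + 1) < d * u by omega)
        have h3 : u < beta t d M' + 1 :=
          Nat.lt_of_mul_lt_mul_left (show d * u < d * (beta t d M' + 1) by omega)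
        obtain ⟨e, rfl⟩ : ∃ e, u = alpha d M' + 1 + e := ⟨u - alpha d M' - 1, by omega⟩
        have he : d * (alpha d M' + 1 + e) = d * (alpha d M' + 1) + d * e := by ring
        have heq : d * e = 1 + t * q + r := by omega
        have hres := resid ht hd hmod (by omega) hr heq
        by_cases hueq : alpha d M' + 1 + e = beta t d M'
        · rw [ihC _ huln M' hueq] at hval
          have := pat_lt ht hr
          omega
        · by_cases hrt : r = t - 1
          · obtain ⟨u₃, hu₃1, hu₃⟩ := hres.2 hrt
            rw [ihB _ huln M' u₃ 0 (by omega) (by omega) (by omega)] at hval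
            have := pat_inj ht (show (0:ℕ) < t by omega) hr (show pat t 0 = pat t r by omega)
            omega
          · obtain ⟨u₃, hu₃⟩ := hres.1 (by omega)
            rw [ihB _ huln M' u₃ (r + 1) (by omega) (by omega) (by omega)] at hval
            have := pat_inj ht (show r + 1 < t by omega) hr (show pat t (r + 1) = pat t r by omega)
            omega
    by_cases hq0 : q = 0
    · subst hq0
      by_cases hrt : r = t - 1
      · have hpr : pat t r = t - 1 := by unfold pat; split_ifs <;> omega
        apply sg_eq_of hd
        · intro j hj
          obtain ⟨ρ, hρ1, hρ2, hρ3⟩ := pat_surj ht (show j < t by omega)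
          have hρ4 : ρ ≤ t - 2 := hρ3 (by omega)
          left
          refine ⟨t - 1 - ρ, by omega, by omega, by omega, ?_⟩
          rw [ihB (n - (t - 1 - ρ)) (by omega) M 0 ρ (by omega) (by omega) (by omega), hρ2]
        · rintro (⟨s, hs1, hs2, hs3, hval⟩ | ⟨hpos, hdvd, hval⟩)
          · rw [ihB (n - s) (by omega) M 0 (t - 1 - s) (by omega) (by omega) (by omega)] at hval
            have := pat_inj ht (show t - 1 - s < t by omega) hr
              (show pat t (t - 1 - s) = pat t r by omega)
            omega
          · exact hBdiv _ hdvd hval rfl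
      · have hpr : pat t r = if r = t - 2 then 0 else r + 1 := by
          unfold pat; split_ifs <;> omega
        have hsgα : sg t d hd (alpha d M) = if t = 2 ∧ 1 ≤ M then 1 else t :=
          ihA (alpha d M) (by omega) M rfl
        have hAval : ∀ k, 1 ≤ k → k ≤ t - 2 →
            sg t d hd (alpha d M - k) = if k = 1 then 0 else t + 1 - k := by
          intro k hk1 hk2
          cases M with
          | zero =>
            obtain ⟨w₀, hw₀1, hw₀⟩ := E7 ht hd hmod
            obtain ⟨w₁, rfl⟩ : ∃ w₁, w₀ = w₁ + 1 := ⟨w₀ - 1, by omega⟩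
            have e1 : t * (w₁ + 1) = t * w₁ + t := by ring
            rw [alpha_zero] at hαd hrep hv ⊢
            by_cases hk : k = 1
            · rw [if_pos hk,
                ihE (d - k) (by omega) (w₁ + 1) 0 (by omega) (by omega) (by omega)]
            · rw [if_neg hk,
                ihE (d - k) (by omega) w₁ (t + 1 - k) (by omega) (by omega) (by omega)]
          | succ M' =>
            obtain ⟨w, hw1, hw⟩ := E6 ht hd hmod M'
            obtain ⟨w₂, rfl⟩ : ∃ w₂, w = w₂ + 1 := ⟨w - 1, by omega⟩
            have e1 : t * (w₂ + 1) = t * w₂ + t := by ring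
            by_cases hk : k = 1
            · rw [if_pos hk, ihD (alpha d (M' + 1) - k) (by omega) M' (w₂ + 1) 0
                (by omega) (by omega) (by omega)]
            · rw [if_neg hk, ihD (alpha d (M' + 1) - k) (by omega) M' w₂ (t + 1 - k)
                (by omega) (by omega) (by omega)]
        apply sg_eq_of hd
        · intro j hj
          have hnt2 : ¬ (r = t - 2) := by
            intro hcon; rw [hpr, if_pos hcon] at hj; omega
          have hr3 : r + 3 ≤ t := by omega
          rw [hpr, if_neg hnt2] at hj
          left
          by_cases hj0 : j = 0
          · refine ⟨r + 2, by omega, by omega, by omega, ?_⟩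
            rw [show n - (r + 2) = alpha d M - 1 by omega, hAval 1 le_rfl (by omega),
              if_pos rfl, hj0]
          · refine ⟨r + 1 - j, by omega, by omega, by omega, ?_⟩
            rw [ihB (n - (r + 1 - j)) (by omega) M 0 (j - 1) (by omega) (by omega) (by omega)]
            unfold pat; split_ifs <;> omega
        · rintro (⟨s, hs1, hs2, hs3, hval⟩ | ⟨hpos, hdvd, hval⟩)
          · by_cases hsr : s ≤ r
            · rw [ihB (n - s) (by omega) M 0 (r - s) (by omega) (by omega) (by omega)] at hval
              have := pat_inj ht (show r - s < t by omega) hr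
                (show pat t (r - s) = pat t r by omega)
              omega
            · by_cases hsr1 : s = r + 1
              · rw [show n - s = alpha d M by omega, hsgα] at hval
                rw [hpr] at hval
                split_ifs at hval <;> omega
              · rw [show n - s = alpha d M - (s - r - 1) by omega,
                  hAval (s - r - 1) (by omega) (by omega)] at hval
                rw [hpr] at hval
                split_ifs at hval <;> omega
          · exact hBdiv _ hdvd hval rfl
    · obtain ⟨q₁, rfl⟩ : ∃ q₁, q = q₁ + 1 := ⟨q - 1, by omega⟩
      have e1 : t * (q₁ + 1) = t * q₁ + t := by ring
      have hprt := pat_lt ht hr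
      apply sg_eq_of hd
      · intro j hj
        obtain ⟨ρ, hρ1, hρ2, -⟩ := pat_surj ht (show j < t by omega)
        have hρr : ρ ≠ r := by intro hcon; rw [hcon] at hρ2; omega
        left
        by_cases hρlt : ρ < r
        · refine ⟨r - ρ, by omega, by omega, by omega, ?_⟩
          rw [ihB (n - (r - ρ)) (by omega) M (q₁ + 1) ρ (by omega) (by omega) (by omega), hρ2]
        · refine ⟨t + r - ρ, by omega, by omega, by omega, ?_⟩
          rw [ihB (n - (t + r - ρ)) (by omega) M q₁ ρ (by omega) (by omega) (by omega), hρ2]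
      · rintro (⟨s, hs1, hs2, hs3, hval⟩ | ⟨hpos, hdvd, hval⟩)
        · by_cases hsr : s ≤ r
          · rw [ihB (n - s) (by omega) M (q₁ + 1) (r - s) (by omega) (by omega)
              (by omega)] at hval
            have := pat_inj ht (show r - s < t by omega) hr
              (show pat t (r - s) = pat t r by omega)
            omega
          · rw [ihB (n - s) (by omega) M q₁ (t + r - s) (by omega) (by omega)
              (by omega)] at hval
            have := pat_inj ht (show t + r - s < t by omega) hr
              (show pat t (t + r - s) = pat t r by omega)
            omega
        · exact hBdiv _ hdvd hval rfl
  · -- Part C : n = beta M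
    intro M hM
    obtain ⟨v, hv2, hv⟩ := E5 ht hd hmod M
    have hαd : d ≤ alpha d M := alpha_ge hd M
    obtain ⟨v₂, rfl⟩ : ∃ v₂, v = v₂ + 2 := ⟨v - 2, by omega⟩
    have e1 : t * (v₂ + 2) = t * v₂ + t + t := by ring
    have e2 : t * (v₂ + 1) = t * v₂ + t := by ring
    have hdval : sg t d hd (n / d) = 0 := by
      cases M with
      | zero =>
        have hd2 : t * 2 ≤ t * d := Nat.mul_le_mul_left t (by omega)
        have e3 : t * 2 = t + t := by ring
        rw [hM, beta_zero, show t * d = d * t from mul_comm t d,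
          Nat.mul_div_cancel_left _ (show 0 < d by omega)]
        exact ihE t (by omega) 1 0 (by omega) (by omega) (by omega)
      | succ M' =>
        obtain ⟨w, hw1, hw⟩ := E6 ht hd hmod M'
        have e4 : t * 1 ≤ t * w := Nat.mul_le_mul_left t hw1
        have hβd : 2 * (beta t d M' + 1) ≤ d * (beta t d M' + 1) :=
          Nat.mul_le_mul_right _ hd
        rw [hM, beta_succ, Nat.mul_div_cancel_left _ (show 0 < d by omega)]
        exact ihD (beta t d M' + 1) (by omega) M' 0 0 (by omega) (by omega) (by omega)
    have hdd : d ∣ n := by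
      cases M with
      | zero => rw [hM, beta_zero]; exact ⟨t, mul_comm t d⟩
      | succ M' => rw [hM, beta_succ]; exact ⟨_, rfl⟩
    apply sg_eq_of hd
    · intro j hj
      by_cases hj0 : j = 0
      · right
        refine ⟨by omega, hdd, ?_⟩
        rw [hdval, hj0]
      · left
        by_cases hjt : j = t - 1
        · refine ⟨t - 1, by omega, by omega, by omega, ?_⟩
          rw [ihB (n - (t - 1)) (by omega) M v₂ (t - 1) (by omega) (by omega) (by omega)]
          unfold pat; split_ifs <;> omega
        · refine ⟨t - 1 - j, by omega, by omega, by omega, ?_⟩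
          rw [ihB (n - (t - 1 - j)) (by omega) M (v₂ + 1) (j - 1) (by omega) (by omega)
            (by omega)]
          unfold pat; split_ifs <;> omega
    · rintro (⟨s, hs1, hs2, hs3, hval⟩ | ⟨hpos, hdvd, hval⟩)
      · by_cases hst : s ≤ t - 2
        · rw [ihB (n - s) (by omega) M (v₂ + 1) (t - 2 - s) (by omega) (by omega)
            (by omega)] at hval
          have := pat_lt ht (show t - 2 - s < t by omega)
          omega
        · rw [ihB (n - s) (by omega) M v₂ (t - 1) (by omega) (by omega) (by omega)] at hval
          have := pat_lt ht (show t - 1 < t by omega)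
          omega
      · rw [hdval] at hval; omega
  · -- Part D : n in (beta M, alpha (M+1))
    intro M q r hr hrep hltα
    obtain ⟨v, hv2, hv⟩ := E5 ht hd hmod M
    obtain ⟨v₂, rfl⟩ : ∃ v₂, v = v₂ + 2 := ⟨v - 2, by omega⟩
    have e5a : t * (v₂ + 2) = t * v₂ + t + t := by ring
    have e5b : t * (v₂ + 1) = t * v₂ + t := by ring
    have hαd : d ≤ alpha d M := alpha_ge hd M
    have hDdiv : ∀ x, d ∣ n → x = sg t d hd (n / d) → x ≠ r := by
      intro x hdvd hval hx
      obtain ⟨u, hu⟩ := hdvd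
      have hquot : n / d = u := by rw [hu, Nat.mul_div_cancel_left _ (show 0 < d by omega)]
      rw [hquot] at hval
      have huln : u < n := by
        have h4 : 2 * u ≤ d * u := Nat.mul_le_mul_right u hd
        omega
      cases M with
      | zero =>
        have hβ0 : beta t d 0 = t * d := beta_zero t d
        have hα1 : alpha d (0 + 1) = d * (d + 1) := by rw [alpha_succ, alpha_zero]
        have ed : t * d = d * t := mul_comm t d
        have h2 : t < u := Nat.lt_of_mul_lt_mul_left (show d * t < d * u by omega)
        have h3 : u < d + 1 := Nat.lt_of_mul_lt_mul_left (show d * u < d * (d + 1) by omega)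
        have h5 : d * 2 ≤ d * u := Nat.mul_le_mul_left d (by omega)
        by_cases hud : u = d
        · rw [hud, ihA d (by omega) 0 (alpha_zero d).symm, if_neg (by omega)] at hval
          omega
        · obtain ⟨e, rfl⟩ : ∃ e, u = t + e := ⟨u - t, by omega⟩
          have he : d * (t + e) = d * t + d * e := by ring
          have heq : d * e = 1 + t * q + r := by omega
          have hres := resid ht hd hmod (by omega) hr heq
          by_cases hrt : r = t - 1
          · obtain ⟨u₃, hu₃1, hu₃⟩ := hres.2 hrt
            have e6 : t * (u₃ + 1) = t * u₃ + t := by ring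
            rw [ihE (t + e) (by omega) (u₃ + 1) 0 (by omega) (by omega) (by omega)] at hval
            omega
          · obtain ⟨u₃, hu₃⟩ := hres.1 (by omega)
            have e6 : t * (u₃ + 1) = t * u₃ + t := by ring
            have ha1 : t + e < n := by omega
            have ha2 : r + 1 < t := by omega
            have ha3 : t + e = t * (u₃ + 1) + (r + 1) := by omega
            have ha4 : t + e < d := by clear * - h3 hud; omega
            rw [ihE (t + e) ha1 (u₃ + 1) (r + 1) ha2 ha3 ha4] at hval
            omega
      | succ M' =>
        have hβs : beta t d (M' + 1) = d * (beta t d M' + 1) := beta_succ t d M'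
        have hαs : alpha d (M' + 1 + 1) = d * (alpha d (M' + 1) + 1) := alpha_succ d (M' + 1)
        have h2 : beta t d M' + 1 < u :=
          Nat.lt_of_mul_lt_mul_left (show d * (beta t d M' + 1) < d * u by omega)
        have h3 : u < alpha d (M' + 1) + 1 :=
          Nat.lt_of_mul_lt_mul_left (show d * u < d * (alpha d (M' + 1) + 1) by omega)
        obtain ⟨e, rfl⟩ : ∃ e, u = beta t d M' + 1 + e := ⟨u - beta t d M' - 1, by omega⟩
        have he : d * (beta t d M' + 1 + e) = d * (beta t d M' + 1) + d * e := by ring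
        have heq : d * e = 1 + t * q + r := by omega
        have hres := resid ht hd hmod (by omega) hr heq
        by_cases hueq : beta t d M' + 1 + e = alpha d (M' + 1)
        · rw [ihA _ huln (M' + 1) hueq] at hval
          by_cases ht2 : t = 2 ∧ 1 ≤ M' + 1
          · rw [if_pos ht2] at hval
            obtain ⟨w, hw1, hw⟩ := E6 ht hd hmod M'
            obtain ⟨w₀, hw₀1, hw₀⟩ := E7 ht hd hmod
            have hee : e = 1 + t * w := by omega
            rw [hee] at heq
            have e7 : d * (1 + t * w) = t * w₀ + 1 + t * (d * w) := by rw [hw₀]; ring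
            have e8 : t * w₀ + t * (d * w) = t * (w₀ + d * w) := by ring
            have hr0 : r = 0 := r_zero (by omega) hr (show t * q + r = t * (w₀ + d * w) by omega)
            omega
          · rw [if_neg ht2] at hval
            omega
        · by_cases hrt : r = t - 1
          · obtain ⟨u₃, hu₃1, hu₃⟩ := hres.2 hrt
            rw [ihD _ huln M' u₃ 0 (by omega) (by omega) (by omega)] at hval
            omega
          · obtain ⟨u₃, hu₃⟩ := hres.1 (by omega)
            rw [ihD _ huln M' u₃ (r + 1) (by omega) (by omega) (by omega)] at hval
            omega
    apply sg_eq_of hd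
    · intro j hj
      left
      refine ⟨r - j, by omega, by omega, by omega, ?_⟩
      exact (ihD (n - (r - j)) (by omega) M q j (by omega) (by omega) (by omega)).symm
    · rintro (⟨s, hs1, hs2, hs3, hval⟩ | ⟨hpos, hdvd, hval⟩)
      · by_cases hsr : s ≤ r
        · rw [ihD (n - s) (by omega) M q (r - s) (by omega) (by omega) (by omega)] at hval
          omega
        · by_cases hse : s ≤ t * q + r
          · have hq1 : 1 ≤ q := by
              rcases Nat.eq_zero_or_pos q with hz | hz
              · subst hz; omega
              · exact hz
            obtain ⟨q₁, rfl⟩ : ∃ q₁, q = q₁ + 1 := ⟨q - 1, by omega⟩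
            have e2 : t * (q₁ + 1) = t * q₁ + t := by ring
            rw [ihD (n - s) (by omega) M q₁ (t + r - s) (by omega) (by omega)
              (by omega)] at hval
            omega
          · by_cases hse2 : s = t * q + r + 1
            · rw [show n - s = beta t d M by omega, ihC (beta t d M) (by omega) M rfl] at hval
              omega
            · have hq0 : q = 0 := by
                rcases Nat.eq_zero_or_pos q with hz | hz
                · exact hz
                · exfalso; have : t * 1 ≤ t * q := Nat.mul_le_mul_left t hz; omega
              subst hq0
              rw [ihB (n - s) (by omega) M (v₂ + 1) (t - 2 - (s - r - 1)) (by omega)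
                (by omega) (by omega)] at hval
              unfold pat at hval; split_ifs at hval <;> omega
      · exact hDdiv _ hdvd hval rfl
  · -- Part E : n < d
    intro q r hr hrep hlt
    apply sg_eq_of hd
    · intro j hj
      left
      refine ⟨r - j, by omega, by omega, by omega, ?_⟩
      exact (ihE (n - (r - j)) (by omega) q j (by omega) (by omega) (by omega)).symm
    · rintro (⟨s, hs1, hs2, hs3, hval⟩ | ⟨hpos, hdvd, hval⟩)
      · by_cases hsr : s ≤ r
        · rw [ihE (n - s) (by omega) q (r - s) (by omega) (by omega) (by omega)] at hval
          omega
        · rcases Nat.eq_zero_or_pos q with hq | hq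
          · subst hq; omega
          · obtain ⟨q₁, rfl⟩ : ∃ q₁, q = q₁ + 1 := ⟨q - 1, by omega⟩
            have e1 : t * (q₁ + 1) = t * q₁ + t := by ring
            rw [ihE (n - s) (by omega) q₁ (t + r - s) (by omega) (by omega)
              (by omega)] at hval
            omega
      · exact absurd (Nat.le_of_dvd hpos hdvd) (by omega)

theorem sg_Bm (t d : ℕ) (ht : 2 ≤ t) (hd : 2 ≤ d) (hmod : d % t = 1)
    (m : ℕ) (n : ℕ) (h1 : alpha d m < n) (h2 : n < beta t d m)
    (r : ℕ) (hr : r = (n - alpha d m - 1) % t) :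
    (r + 3 ≤ t → sg t d hd n = r + 1) ∧
    (r = t - 2 → sg t d hd n = 0) ∧
    (r = t - 1 → sg t d hd n = t - 1) := by
  have hrt : r < t := by rw [hr]; exact Nat.mod_lt _ (by omega)
  have hq := Nat.div_add_mod (n - alpha d m - 1) t
  have hrep : n = alpha d m + 1 + t * ((n - alpha d m - 1) / t) + r := by omega
  have hsg := (sg_main ht hd hmod n).2.1 m ((n - alpha d m - 1) / t) r hrt hrep h2
  rw [hsg]
  unfold pat
  refine ⟨?_, ?_, ?_⟩ <;> intro h <;> split_ifs <;> omega
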